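/- Let d, h be positive integers, W_f, W_i, W_m real h×(1+d+h) matrices, and fix s ∈ ℝ^h and c ∈ ℝ^h. Define Φ : ℝ^d → ℝ^h by Φ(x) = σ_s(W_f·(1,x,s)) ⊙ c + σ_s(W_i·(1,x,s)) ⊙ tanh(W_m·(1,x,s)), where σ_s(t) = 1/(1+e^{−t}) and tanh are applied entrywise and ⊙ is the entrywise product. Then for all x, x' ∈ ℝ^d, ‖Φ(x) − Φ(x')‖_∞ ≤ (‖W_f‖·‖c‖_∞ + ‖W_i‖ + ‖W_m‖)·‖x − x'‖_∞. -/

import Mathlib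

/-!
With the pre-activations `z = W (1, x, s)`, the update is `σ(z_f) ⊙ c + σ(z_i) ⊙ tanh(z_m)`.
Both `σ` and `tanh` are `1`-Lipschitz with values in `[-1, 1]`, and `ℝ^h` with the sup norm is a
normed ring under `⊙`, so `ab - a'b' = (a - a')b + a'(b - b')` bounds the change of the update by
`‖Δz_f‖ ‖c‖ + ‖Δz_i‖ + ‖Δz_m‖`. Finally `‖Δz‖ ≤ ‖W‖ ‖x - x'‖`, since `(1, x, s) - (1, x', s)` has
sup norm at most `‖x - x'‖`.
-/

open scoped BigOperators

/-- The operator norm of a real matrix induced by the sup norms, i.e. the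
maximum absolute row sum `max_i Σ_j |W i j|`. -/
noncomputable def supRowSum {m n : ℕ} (W : Matrix (Fin m) (Fin n) ℝ) : ℝ :=
  ⨆ i, ∑ j, |W i j|

/-- The logistic sigmoid `σ_s(t) = 1/(1+e^{-t})`. -/
noncomputable def sigmoid (t : ℝ) : ℝ := 1 / (1 + Real.exp (-t))

/-- The vector `(1, x, s) ∈ ℝ^{1+d+h}` obtained by concatenating 1, x and s. -/
def oneVec2 {d h : ℕ} (x : Fin d → ℝ) (s : Fin h → ℝ) : Fin (1 + d + h) → ℝ :=
  Fin.append (Fin.append ![(1 : ℝ)] x) s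

open Matrix

theorem sigmoid_eq_real_sigmoid : sigmoid = Real.sigmoid := by
  funext t
  rw [sigmoid, Real.sigmoid_def, one_div]

theorem abs_sigmoid_le_one (t : ℝ) : |sigmoid t| ≤ 1 := by
  rw [sigmoid_eq_real_sigmoid, abs_of_nonneg (Real.sigmoid_nonneg t)]
  exact Real.sigmoid_le_one t

theorem lipschitzWith_sigmoid : LipschitzWith 1 sigmoid := by
  rw [sigmoid_eq_real_sigmoid]
  refine lipschitzWith_of_nnnorm_deriv_le differentiable_sigmoid fun t => ?_
  have h0 := Real.sigmoid_nonneg t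
  have h1 := Real.sigmoid_le_one t
  rw [Real.deriv_sigmoid, ← NNReal.coe_le_coe, coe_nnnorm, NNReal.coe_one, Real.norm_eq_abs,
    abs_of_nonneg (mul_nonneg h0 (sub_nonneg.2 h1))]
  exact mul_le_one₀ h1 (sub_nonneg.2 h1) (by linarith)

theorem Real.hasDerivAt_tanh (t : ℝ) : HasDerivAt Real.tanh (1 - Real.tanh t ^ 2) t := by
  have hc := (Real.cosh_pos t).ne'
  rw [show Real.tanh = fun u => Real.sinh u / Real.cosh u from funext Real.tanh_eq_sinh_div_cosh]
  refine ((Real.hasDerivAt_sinh t).div (Real.hasDerivAt_cosh t) hc).congr_deriv ?_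
  field_simp

theorem Real.lipschitzWith_tanh : LipschitzWith 1 Real.tanh := by
  refine lipschitzWith_of_nnnorm_deriv_le (fun t => (Real.hasDerivAt_tanh t).differentiableAt)
    fun t => ?_
  have h := Real.abs_tanh_lt_one t
  rw [(Real.hasDerivAt_tanh t).deriv, ← NNReal.coe_le_coe, coe_nnnorm, NNReal.coe_one,
    Real.norm_eq_abs, abs_le]
  constructor <;> nlinarith [sq_abs (Real.tanh t), abs_nonneg (Real.tanh t)]

theorem norm_mul_sub_mul_le {R : Type*} [NonUnitalSeminormedRing R] (a a' b b' : R) :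
    ‖a * b - a' * b'‖ ≤ ‖a - a'‖ * ‖b‖ + ‖a'‖ * ‖b - b'‖ :=
  calc ‖a * b - a' * b'‖ = ‖(a - a') * b + a' * (b - b')‖ := by noncomm_ring
    _ ≤ ‖a - a'‖ * ‖b‖ + ‖a'‖ * ‖b - b'‖ := norm_add_le_of_le (norm_mul_le _ _) (norm_mul_le _ _)

section Entrywise

variable {ι : Type*} [Fintype ι]

theorem LipschitzWith.norm_comp_sub_comp_le {f : ℝ → ℝ} {K : NNReal} (hf : LipschitzWith K f)
    (u v : ι → ℝ) : ‖f ∘ u - f ∘ v‖ ≤ K * ‖u - v‖ := by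
  refine (pi_norm_le_iff_of_nonneg (by positivity)).2 fun i => ?_
  calc ‖f (u i) - f (v i)‖ ≤ K * ‖u i - v i‖ := by
        simpa only [dist_eq_norm] using hf.dist_le_mul (u i) (v i)
    _ ≤ K * ‖u - v‖ := by gcongr; exact norm_le_pi_norm (u - v) i

theorem norm_comp_le_one {f : ℝ → ℝ} (hf : ∀ t, |f t| ≤ 1) (u : ι → ℝ) : ‖f ∘ u‖ ≤ 1 :=
  (pi_norm_le_iff_of_nonneg zero_le_one).2 fun i => hf (u i)

noncomputable def lstmCellUpdate (c zf zi zm : ι → ℝ) : ι → ℝ :=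
  sigmoid ∘ zf * c + sigmoid ∘ zi * Real.tanh ∘ zm

theorem norm_lstmCellUpdate_sub_le (c zf zi zm zf' zi' zm' : ι → ℝ) :
    ‖lstmCellUpdate c zf zi zm - lstmCellUpdate c zf' zi' zm'‖ ≤
      ‖zf - zf'‖ * ‖c‖ + ‖zi - zi'‖ + ‖zm - zm'‖ := by
  have hσ (u v : ι → ℝ) : ‖sigmoid ∘ u - sigmoid ∘ v‖ ≤ ‖u - v‖ := by
    simpa using lipschitzWith_sigmoid.norm_comp_sub_comp_le u v
  have htanh (u v : ι → ℝ) : ‖Real.tanh ∘ u - Real.tanh ∘ v‖ ≤ ‖u - v‖ := by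
    simpa using Real.lipschitzWith_tanh.norm_comp_sub_comp_le u v
  calc ‖lstmCellUpdate c zf zi zm - lstmCellUpdate c zf' zi' zm'‖
      = ‖(sigmoid ∘ zf - sigmoid ∘ zf') * c
          + (sigmoid ∘ zi * Real.tanh ∘ zm - sigmoid ∘ zi' * Real.tanh ∘ zm')‖ := by
        rw [lstmCellUpdate, lstmCellUpdate]; congr 1; ring
    _ ≤ ‖sigmoid ∘ zf - sigmoid ∘ zf'‖ * ‖c‖
          + (‖sigmoid ∘ zi - sigmoid ∘ zi'‖ * ‖Real.tanh ∘ zm‖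
            + ‖sigmoid ∘ zi'‖ * ‖Real.tanh ∘ zm - Real.tanh ∘ zm'‖) :=
        norm_add_le_of_le (norm_mul_le _ _) (norm_mul_sub_mul_le _ _ _ _)
    _ ≤ ‖zf - zf'‖ * ‖c‖ + (‖zi - zi'‖ * 1 + 1 * ‖zm - zm'‖) := by
        gcongr
        exacts [hσ _ _, hσ _ _, norm_comp_le_one (fun t => (Real.abs_tanh_lt_one t).le) _,
          norm_comp_le_one abs_sigmoid_le_one _, htanh _ _]
    _ = ‖zf - zf'‖ * ‖c‖ + ‖zi - zi'‖ + ‖zm - zm'‖ := by ring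

end Entrywise

section LinftyOpNorm

attribute [local instance] Matrix.linftyOpSeminormedAddCommGroup

theorem supRowSum_eq_linfty_opNorm {m n : ℕ} (W : Matrix (Fin m) (Fin n) ℝ) :
    supRowSum W = ‖W‖ := by
  rw [supRowSum, Matrix.linfty_opNorm_def, Finset.sup_univ_eq_ciSup, NNReal.coe_iSup]
  simp only [NNReal.coe_sum, coe_nnnorm, Real.norm_eq_abs]

theorem supRowSum_nonneg {m n : ℕ} (W : Matrix (Fin m) (Fin n) ℝ) : 0 ≤ supRowSum W :=
  supRowSum_eq_linfty_opNorm W ▸ norm_nonneg W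

theorem norm_mulVec_le_supRowSum_mul {m n : ℕ} (W : Matrix (Fin m) (Fin n) ℝ) (v : Fin n → ℝ) :
    ‖W *ᵥ v‖ ≤ supRowSum W * ‖v‖ :=
  supRowSum_eq_linfty_opNorm W ▸ Matrix.linfty_opNorm_mulVec W v

end LinftyOpNorm

theorem norm_oneVec2_sub_le {d h : ℕ} (x x' : Fin d → ℝ) (s : Fin h → ℝ) :
    ‖oneVec2 x s - oneVec2 x' s‖ ≤ ‖x - x'‖ := by
  refine (pi_norm_le_iff_of_nonneg (norm_nonneg _)).2 fun j => ?_
  refine Fin.addCases (fun j => Fin.addCases (fun k => ?one) (fun k => ?input) j)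
    (fun k => ?state) j
  case one | state => simp [oneVec2]
  case input =>
    simp only [oneVec2, Fin.append_left, Fin.append_right, Pi.sub_apply]
    exact norm_le_pi_norm (x - x') k

theorem lstm_cell_update_lipschitz_general
    (d h : ℕ)
    (Wf Wi Wm : Matrix (Fin h) (Fin (1 + d + h)) ℝ)
    (s c : Fin h → ℝ)
    (Φ : (Fin d → ℝ) → Fin h → ℝ)
    (hΦ : Φ = fun x i =>
      sigmoid (Wf.mulVec (oneVec2 x s) i) * c i
        + sigmoid (Wi.mulVec (oneVec2 x s) i) * Real.tanh (Wm.mulVec (oneVec2 x s) i))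
    (x x' : Fin d → ℝ) :
    ‖Φ x - Φ x'‖ ≤ (supRowSum Wf * ‖c‖ + supRowSum Wi + supRowSum Wm) * ‖x - x'‖ := by
  have hcell (y : Fin d → ℝ) :
      Φ y = lstmCellUpdate c (Wf *ᵥ oneVec2 y s) (Wi *ᵥ oneVec2 y s) (Wm *ᵥ oneVec2 y s) := by
    subst hΦ; rfl
  have hpre (W : Matrix (Fin h) (Fin (1 + d + h)) ℝ) :
      ‖W *ᵥ oneVec2 x s - W *ᵥ oneVec2 x' s‖ ≤ supRowSum W * ‖x - x'‖ := by
    rw [← Matrix.mulVec_sub]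
    exact (norm_mulVec_le_supRowSum_mul W _).trans
      (mul_le_mul_of_nonneg_left (norm_oneVec2_sub_le x x' s) (supRowSum_nonneg W))
  rw [hcell x, hcell x']
  refine (norm_lstmCellUpdate_sub_le _ _ _ _ _ _ _).trans ?_
  calc _ ≤ supRowSum Wf * ‖x - x'‖ * ‖c‖ + supRowSum Wi * ‖x - x'‖
          + supRowSum Wm * ‖x - x'‖ := by gcongr <;> exact hpre _
    _ = _ := by ring

theorem lstm_cell_update_lipschitz
    (d h : ℕ) (hd : 0 < d) (hh : 0 < h)
    (Wf Wi Wm : Matrix (Fin h) (Fin (1 + d + h)) ℝ)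
    (s c : Fin h → ℝ)
    (Φ : (Fin d → ℝ) → Fin h → ℝ)
    (hΦ : Φ = fun x i =>
      sigmoid (Wf.mulVec (oneVec2 x s) i) * c i
        + sigmoid (Wi.mulVec (oneVec2 x s) i) * Real.tanh (Wm.mulVec (oneVec2 x s) i))
    (x x' : Fin d → ℝ) :
    ‖Φ x - Φ x'‖ ≤ (supRowSum Wf * ‖c‖ + supRowSum Wi + supRowSum Wm) * ‖x - x'‖ :=
  lstm_cell_update_lipschitz_general d h Wf Wi Wm s c Φ hΦ x x'
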